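/- arXiv:2211.00624 — 4 statements merged into one kernel-verified Lean document; each statement's English description precedes it below -/
import Mathlib

section
/- Let G ⊆ ℝ² be a bounded domain with |G| > 0 and suppose there exists β₀ > 0 such that ∫_G e^{φ} ≤ |G| exp((1/(4β₀))∫_G |∇φ|² + (1/|G|)∫_G φ) for all φ ∈ W^{1,2}(G). Then for all φ ∈ W^{1,2}(G), all positive ψ ∈ L^p(G) with p > 1, and all a > 0, ∫_G φ(ψ − ψ̄) ≤ (1/a)∫_G ψ ln(ψ/ψ̄) + (a/(4β₀))·(∫_G ψ)·∫_G |∇φ|², where ψ̄ := (1/|G|)∫_G ψ. -/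
open MeasureTheory Real

/-!
Apply the Trudinger–Moser hypothesis to the mean-zero function `u = a (φ - φ̄)`: this bounds
`∫_G e^u` by `|G| e^c` with `c = a² / (4β₀) ∫_G |∇φ|²`. Integrating the Fenchel–Young inequality
`s t ≤ e^s + t log t - t` at `s = u - c`, `t = ψ / ψ̄` turns this into
`a ∫_G (φ - φ̄) ψ ≤ ∫_G ψ log (ψ / ψ̄) + c ∫_G ψ`, and `∫_G (φ - φ̄) ψ = ∫_G φ (ψ - ψ̄)`.
-/

theorem gradient_const_mul_sub_const {F : Type*} [NormedAddCommGroup F] [InnerProductSpace ℝ F]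
    [CompleteSpace F] (f : F → ℝ) (a m : ℝ) (x : F) :
    gradient (fun y => a * (f y - m)) x = a • gradient f x := by
  have : (fun y => a * (f y - m)) = a • fun y => f y - m := rfl
  rw [gradient, this, fderiv_const_smul_field, Pi.smul_apply, fderiv_sub_const, map_smul]
  rfl

theorem Real.mul_le_exp_add_mul_log_sub {u v : ℝ} (hv : 0 < v) :
    u * v ≤ exp u + v * log v - v := by
  have h := add_one_le_exp (u - log v)
  rw [exp_sub, exp_log hv, le_div_iff₀ hv] at h
  linarith

section Entropy
variable {α : Type*} [MeasurableSpace α] {μ : Measure α} [IsFiniteMeasure μ] [NeZero μ]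

theorem average_pos_of_ae_pos {v : α → ℝ} (hv : ∀ᵐ x ∂μ, 0 < v x) (hvi : Integrable v μ) :
    0 < ⨍ x, v x ∂μ := by
  have hint : 0 < ∫ x, v x ∂μ := by
    refine (integral_nonneg_of_ae (hv.mono fun x hx => hx.le)).lt_of_ne fun h => ?_
    have hzero := (integral_eq_zero_iff_of_nonneg_ae (hv.mono fun x hx => hx.le) hvi).mp h.symm
    have : ∀ᵐ x ∂μ, False := (hv.and hzero).mono fun x hx => hx.1.ne' hx.2
    exact NeZero.ne μ (ae_eq_bot.mp (Filter.eventually_false_iff_eq_bot.mp this))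
  rw [average_eq, smul_eq_mul]
  exact mul_pos (inv_pos.mpr (measureReal_univ_pos)) hint

theorem integral_mul_le_integral_mul_log_div_average_add {u v : α → ℝ} {c : ℝ}
    (hv : ∀ᵐ x ∂μ, 0 < v x) (hvi : Integrable v μ)
    (huv : Integrable (fun x => u x * v x) μ) (hexp : Integrable (fun x => exp (u x)) μ)
    (hent : Integrable (fun x => v x * log (v x / ⨍ y, v y ∂μ)) μ)
    (hc : ∫ x, exp (u x) ∂μ ≤ μ.real Set.univ * exp c) :
    ∫ x, u x * v x ∂μ ≤ ∫ x, v x * log (v x / ⨍ y, v y ∂μ) ∂μ + c * ∫ x, v x ∂μ := by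
  set v₀ := ⨍ y, v y ∂μ
  have hv₀ : 0 < v₀ := average_pos_of_ae_pos hv hvi
  have hpt : ∀ᵐ x ∂μ, u x * v x - c * v x ≤
      v₀ * exp (-c) * exp (u x) + v x * log (v x / v₀) - v x := by
    filter_upwards [hv] with x hx
    have h := mul_le_mul_of_nonneg_left
      (Real.mul_le_exp_add_mul_log_sub (u := u x - c) (div_pos hx hv₀)) hv₀.le
    rw [sub_eq_add_neg (u x), exp_add] at h
    field_simp at h
    linarith
  have hsum : Integrable (fun x => v₀ * exp (-c) * exp (u x) + v x * log (v x / v₀)) μ :=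
    (hexp.const_mul _).add hent
  have hint : ∫ x, (u x * v x - c * v x) ∂μ ≤
      ∫ x, (v₀ * exp (-c) * exp (u x) + v x * log (v x / v₀) - v x) ∂μ :=
    integral_mono_ae (huv.sub (hvi.const_mul c)) (hsum.sub hvi) hpt
  rw [integral_sub huv (hvi.const_mul c), integral_sub hsum hvi,
    integral_add (hexp.const_mul _) hent, integral_const_mul, integral_const_mul] at hint
  have hmass : v₀ * exp (-c) * ∫ x, exp (u x) ∂μ ≤ ∫ x, v x ∂μ := calc
    v₀ * exp (-c) * ∫ x, exp (u x) ∂μ ≤ v₀ * exp (-c) * (μ.real Set.univ * exp c) := by gcongr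
    _ = μ.real Set.univ • v₀ := by rw [smul_eq_mul, exp_neg]; field_simp
    _ = ∫ x, v x ∂μ := measure_smul_average μ v
  linarith
end Entropy

theorem integrable_and_integral_le_of_lintegral_ofReal_le {α : Type*} [MeasurableSpace α]
    {μ : Measure α} {g : α → ℝ} {C : ℝ} (hC : 0 ≤ C) (hg : 0 ≤ᵐ[μ] g)
    (hgm : AEStronglyMeasurable g μ) (h : ∫⁻ x, ENNReal.ofReal (g x) ∂μ ≤ ENNReal.ofReal C) :
    Integrable g μ ∧ ∫ x, g x ∂μ ≤ C := by
  refine ⟨⟨hgm, ?_⟩, ?_⟩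
  · rw [hasFiniteIntegral_iff_ofReal hg]
    exact h.trans_lt ENNReal.ofReal_lt_top
  · rw [integral_eq_lintegral_of_nonneg_ae hg hgm]
    exact ENNReal.toReal_le_of_le_ofReal hC h

theorem integral_sub_average_mul_eq {α : Type*} [MeasurableSpace α] {μ : Measure α}
    [IsFiniteMeasure μ] {f g : α → ℝ} (hf : Integrable f μ) (hg : Integrable g μ)
    (hfg : Integrable (fun x => f x * g x) μ) :
    ∫ x, (f x - ⨍ y, f y ∂μ) * g x ∂μ = ∫ x, f x * (g x - ⨍ y, g y ∂μ) ∂μ := by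
  simp only [sub_mul, mul_sub]
  rw [integral_sub hfg (hg.const_mul _), integral_sub hfg (hf.mul_const _), integral_const_mul,
    integral_mul_const, ← measure_smul_average μ f, ← measure_smul_average μ g, smul_eq_mul,
    smul_eq_mul]
  ring

theorem stmt_6_general (G : Set (EuclideanSpace ℝ (Fin 2))) (hG : MeasurableSet G)
    (hGpos : 0 < volume G) (hGfin : volume G < ⊤)
    (β₀ : ℝ)
    (hTM : ∀ φ : EuclideanSpace ℝ (Fin 2) → ℝ, DifferentiableOn ℝ φ G →
      IntegrableOn φ G → IntegrableOn (fun x => ‖gradient φ x‖ ^ 2) G →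
      ∫⁻ x in G, ENNReal.ofReal (Real.exp (φ x)) ≤
        ENNReal.ofReal ((volume G).toReal *
          Real.exp ((1 / (4 * β₀)) * ∫ x in G, ‖gradient φ x‖ ^ 2 +
            (volume G).toReal⁻¹ * ∫ x in G, φ x)))
    (φ : EuclideanSpace ℝ (Fin 2) → ℝ) (hφd : DifferentiableOn ℝ φ G)
    (hφi : IntegrableOn φ G)
    (hφg : IntegrableOn (fun x => ‖gradient φ x‖ ^ 2) G)
    (ψ : EuclideanSpace ℝ (Fin 2) → ℝ) (hψpos : ∀ x ∈ G, 0 < ψ x)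
    (hψint : IntegrableOn ψ G)
    (a : ℝ) (ha : 0 < a)
    (hφψ : IntegrableOn (fun x => φ x * ψ x) G)
    (hent : IntegrableOn
      (fun x => ψ x * Real.log (ψ x / ((volume G).toReal⁻¹ * ∫ y in G, ψ y))) G) :
    (∫ x in G, φ x * (ψ x - (volume G).toReal⁻¹ * ∫ y in G, ψ y)) ≤
      (1 / a) * (∫ x in G, ψ x * Real.log (ψ x / ((volume G).toReal⁻¹ * ∫ y in G, ψ y))) +
        (a / (4 * β₀)) * (∫ x in G, ψ x) * ∫ x in G, ‖gradient φ x‖ ^ 2 := by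
  have : IsFiniteMeasure (volume.restrict G) := isFiniteMeasure_restrict.mpr hGfin.ne
  have : NeZero (volume.restrict G) := ⟨by simpa [Measure.restrict_eq_zero] using hGpos.ne'⟩
  have hψ_average : (volume G).toReal⁻¹ * ∫ y in G, ψ y = ⨍ y in G, ψ y := by
    rw [setAverage_eq, smul_eq_mul, measureReal_def]
  rw [hψ_average] at hent ⊢
  set u := fun x => a * (φ x - ⨍ y in G, φ y)
  have hu_mean : ∫ x in G, u x = 0 := by
    rw [integral_const_mul, integral_sub hφi (integrable_const _), integral_const,
      measure_smul_average, sub_self, mul_zero]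
  have hu_grad : ∀ x, ‖gradient u x‖ ^ 2 = a ^ 2 * ‖gradient φ x‖ ^ 2 := fun x => by
    rw [gradient_const_mul_sub_const, norm_smul, norm_eq_abs, mul_pow, sq_abs]
  have hTMu := hTM u ((hφd.sub_const _).const_mul a)
    ((hφi.sub (integrableOn_const hGfin.ne)).const_mul a)
    (by simp only [hu_grad]; exact hφg.const_mul (a ^ 2))
  simp only [hu_grad, integral_const_mul, hu_mean, mul_zero, add_zero] at hTMu
  obtain ⟨hexp, hexp_le⟩ := integrable_and_integral_le_of_lintegral_ofReal_le (by positivity)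
    (ae_of_all _ fun x => (exp_pos _).le)
    (continuous_exp.comp_aestronglyMeasurable
      ((hφi.aestronglyMeasurable.sub aestronglyMeasurable_const).const_mul a)) hTMu
  have huψ : IntegrableOn (fun x => u x * ψ x) G := by
    simp only [u, mul_assoc, sub_mul]
    exact (hφψ.sub (hψint.const_mul _)).const_mul a
  have key := integral_mul_le_integral_mul_log_div_average_add (μ := volume.restrict G)
    ((ae_restrict_mem hG).mono hψpos) hψint huψ hexp hent
    (by rwa [measureReal_restrict_apply_univ, measureReal_def])
  simp only [u, mul_assoc, integral_const_mul] at key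
  rw [integral_sub_average_mul_eq hφi hψint hφψ] at key
  refine le_of_mul_le_mul_left (key.trans_eq ?_) ha
  field_simp

/-- The first main functional inequality (1.1), derived from the optimal-constant
Trudinger–Moser inequality. -/
theorem stmt_6 (G : Set (EuclideanSpace ℝ (Fin 2))) (hG : MeasurableSet G)
    (hGpos : 0 < volume G) (hGfin : volume G < ⊤)
    (β₀ : ℝ) (hβ₀ : 0 < β₀)
    (hTM : ∀ φ : EuclideanSpace ℝ (Fin 2) → ℝ, DifferentiableOn ℝ φ G →
      IntegrableOn φ G → IntegrableOn (fun x => ‖gradient φ x‖ ^ 2) G →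
      ∫⁻ x in G, ENNReal.ofReal (Real.exp (φ x)) ≤
        ENNReal.ofReal ((volume G).toReal *
          Real.exp ((1 / (4 * β₀)) * ∫ x in G, ‖gradient φ x‖ ^ 2 +
            (volume G).toReal⁻¹ * ∫ x in G, φ x)))
    (φ : EuclideanSpace ℝ (Fin 2) → ℝ) (hφd : DifferentiableOn ℝ φ G)
    (hφi : IntegrableOn φ G)
    (hφg : IntegrableOn (fun x => ‖gradient φ x‖ ^ 2) G)
    (ψ : EuclideanSpace ℝ (Fin 2) → ℝ) (hψpos : ∀ x ∈ G, 0 < ψ x)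
    (p : ℝ) (hp : 1 < p) (hψLp : IntegrableOn (fun x => ψ x ^ p) G)
    (hψint : IntegrableOn ψ G)
    (a : ℝ) (ha : 0 < a)
    (hφψ : IntegrableOn (fun x => φ x * ψ x) G)
    (hent : IntegrableOn
      (fun x => ψ x * Real.log (ψ x / ((volume G).toReal⁻¹ * ∫ y in G, ψ y))) G) :
    (∫ x in G, φ x * (ψ x - (volume G).toReal⁻¹ * ∫ y in G, ψ y)) ≤
      (1 / a) * (∫ x in G, ψ x * Real.log (ψ x / ((volume G).toReal⁻¹ * ∫ y in G, ψ y))) +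
        (a / (4 * β₀)) * (∫ x in G, ψ x) * ∫ x in G, ‖gradient φ x‖ ^ 2 :=
  stmt_6_general G hG hGpos hGfin β₀ hTM φ hφd hφi hφg ψ hψpos hψint a ha hφψ hent
end

section
/- Let G be a finite measure space, β > 0, and let φ ∈ L^∞ with ∫_G φ = 0 and ∫_G e^{φ} ≥ |G| > 0. Suppose φ satisfies (1/(2β))∫_G |∇φ|² = −(1/|G|)∫_G φ + (∫_G φ e^{φ})/(∫_G e^{φ}) and ∫_G φ e^{φ} ≥ 0. If moreover the Poincaré inequality ∫_G |φ|² ≤ C_p² ∫_G |∇φ|² holds and ‖φ‖_∞ ≤ K, then (1/(2β))∫_G |∇φ|² ≤ (e^{K} C_p²/|G|)·∫_G |∇φ|². Consequently, if 2β e^{K} C_p² < |G|, then ∫_G |∇φ|² = 0. -/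
/-!
Since `φ` has mean zero, `∫ φ e^φ = ∫ φ (e^φ - 1)`, and `φ (e^φ - 1) ≤ e^K φ²` pointwise
when `|φ| ≤ K`. Dividing by `∫ e^φ ≥ |G|` and applying Poincaré bounds the right-hand side of the
Euler–Lagrange identity by `(e^K C_p² / |G|) ∫ |∇φ|²`, which absorbs the left-hand side when
`2β e^K C_p² < |G|`.
-/

open MeasureTheory Real

lemma Real.mul_exp_sub_one_le_exp_mul_sq {t K : ℝ} (ht : |t| ≤ K) :
    t * (exp t - 1) ≤ exp K * t ^ 2 := by
  obtain ⟨htK', htK⟩ := abs_le.mp ht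
  rcases le_or_gt 0 t with ht0 | ht0
  · have hsub : exp t - 1 ≤ t * exp t := by
      have h := add_one_le_exp (-t)
      rw [exp_neg] at h
      have := exp_pos t
      field_simp at h
      nlinarith
    have hexp : exp t ≤ exp K := exp_le_exp.mpr htK
    nlinarith
  · have h := add_one_le_exp t
    have hK : 1 ≤ exp K := one_le_exp (by linarith)
    nlinarith

section Integral

variable {α : Type*} [MeasurableSpace α] {μ : Measure α} {φ : α → ℝ} {K : ℝ}

lemma MeasureTheory.Integrable.sq_of_abs_le (hφ : Integrable φ μ) (hbound : ∀ x, |φ x| ≤ K) :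
    Integrable (fun x => φ x ^ 2) μ := by
  simpa only [sq] using
    hφ.bdd_mul hφ.aestronglyMeasurable (Filter.Eventually.of_forall fun x => hbound x)

lemma integral_mul_exp_le_of_integral_eq_zero (hbound : ∀ x, |φ x| ≤ K)
    (hφ : Integrable φ μ) (hφexp : Integrable (fun x => φ x * exp (φ x)) μ)
    (hmean : ∫ x, φ x ∂μ = 0) :
    ∫ x, φ x * exp (φ x) ∂μ ≤ exp K * ∫ x, φ x ^ 2 ∂μ := by
  have hφ2 := hφ.sq_of_abs_le hbound
  calc ∫ x, φ x * exp (φ x) ∂μ ≤ ∫ x, (exp K * φ x ^ 2 + φ x) ∂μ :=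
        integral_mono hφexp ((hφ2.const_mul _).add hφ) fun x => by
          linarith [mul_exp_sub_one_le_exp_mul_sq (hbound x)]
    _ = exp K * ∫ x, φ x ^ 2 ∂μ := by
        rw [integral_add (hφ2.const_mul _) hφ, integral_const_mul, hmean, add_zero]

end Integral

lemma eq_zero_of_mul_le_mul_of_lt {a c I : ℝ} (hI : 0 ≤ I) (h : a * I ≤ c * I) (hca : c < a) :
    I = 0 := by
  by_contra hne
  exact (lt_irrefl _ ((mul_lt_mul_of_pos_right hca (hI.lt_of_ne' hne)).trans_le h))

theorem stmt_8_general {α : Type*} [MeasurableSpace α] (μ : Measure α)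
    (hpos : 0 < (μ Set.univ).toReal)
    (β : ℝ) (hβ : 0 < β)
    (φ : α → ℝ) (K : ℝ) (hbound : ∀ x, |φ x| ≤ K)
    (hφint : Integrable φ μ) (hmean : (∫ x, φ x ∂μ) = 0)
    (hφexpint : Integrable (fun x => φ x * Real.exp (φ x)) μ)
    (hexplb : (μ Set.univ).toReal ≤ ∫ x, Real.exp (φ x) ∂μ)
    (g : α → ℝ)
    (hEL : (1 / (2 * β)) * (∫ x, g x ^ 2 ∂μ) =
      -(μ Set.univ).toReal⁻¹ * (∫ x, φ x ∂μ) +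
        (∫ x, φ x * Real.exp (φ x) ∂μ) / (∫ x, Real.exp (φ x) ∂μ))
    (hφexppos : 0 ≤ ∫ x, φ x * Real.exp (φ x) ∂μ)
    (Cp : ℝ)
    (hPoincare : (∫ x, φ x ^ 2 ∂μ) ≤ Cp ^ 2 * ∫ x, g x ^ 2 ∂μ) :
    (1 / (2 * β)) * (∫ x, g x ^ 2 ∂μ) ≤
      (Real.exp K * Cp ^ 2 / (μ Set.univ).toReal) * (∫ x, g x ^ 2 ∂μ) ∧
    (2 * β * Real.exp K * Cp ^ 2 < (μ Set.univ).toReal → (∫ x, g x ^ 2 ∂μ) = 0) := by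
  set G := (μ Set.univ).toReal
  set I := ∫ x, g x ^ 2 ∂μ
  have hkey := integral_mul_exp_le_of_integral_eq_zero hbound hφint hφexpint hmean
  have hmain : 1 / (2 * β) * I ≤ exp K * Cp ^ 2 / G * I :=
    calc 1 / (2 * β) * I = (∫ x, φ x * exp (φ x) ∂μ) / ∫ x, exp (φ x) ∂μ := by
          rw [hEL, hmean, mul_zero, zero_add]
      _ ≤ (∫ x, φ x * exp (φ x) ∂μ) / G := div_le_div_of_nonneg_left hφexppos hpos hexplb
      _ ≤ exp K * (Cp ^ 2 * I) / G := by gcongr; exact hkey.trans (by gcongr)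
      _ = exp K * Cp ^ 2 / G * I := by ring
  refine ⟨hmain, fun hsmall => eq_zero_of_mul_le_mul_of_lt (integral_nonneg fun x => sq_nonneg _)
    hmain ?_⟩
  rw [div_lt_div_iff₀ hpos (by positivity)]
  linarith

/-- Small-`β` rigidity step: under the Euler–Lagrange identity, nonnegativity of
`∫ φ e^φ`, the Poincaré inequality and an `L^∞` bound, the Dirichlet energy is
absorbed, and vanishes when `2β e^K C_p² < |G|`. Here `g` plays the role of `|∇φ|`. -/
theorem stmt_8 {α : Type*} [MeasurableSpace α] (μ : Measure α) [IsFiniteMeasure μ]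
    (hpos : 0 < (μ Set.univ).toReal)
    (β : ℝ) (hβ : 0 < β)
    (φ : α → ℝ) (K : ℝ) (hbound : ∀ x, |φ x| ≤ K)
    (hφint : Integrable φ μ) (hmean : (∫ x, φ x ∂μ) = 0)
    (hexpint : Integrable (fun x => Real.exp (φ x)) μ)
    (hφexpint : Integrable (fun x => φ x * Real.exp (φ x)) μ)
    (hexplb : (μ Set.univ).toReal ≤ ∫ x, Real.exp (φ x) ∂μ)
    (g : α → ℝ) (hg : Integrable (fun x => g x ^ 2) μ)
    (hEL : (1 / (2 * β)) * (∫ x, g x ^ 2 ∂μ) =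
      -(μ Set.univ).toReal⁻¹ * (∫ x, φ x ∂μ) +
        (∫ x, φ x * Real.exp (φ x) ∂μ) / (∫ x, Real.exp (φ x) ∂μ))
    (hφexppos : 0 ≤ ∫ x, φ x * Real.exp (φ x) ∂μ)
    (Cp : ℝ) (hCp : 0 < Cp)
    (hPoincare : (∫ x, φ x ^ 2 ∂μ) ≤ Cp ^ 2 * ∫ x, g x ^ 2 ∂μ) :
    (1 / (2 * β)) * (∫ x, g x ^ 2 ∂μ) ≤
      (Real.exp K * Cp ^ 2 / (μ Set.univ).toReal) * (∫ x, g x ^ 2 ∂μ) ∧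
    (2 * β * Real.exp K * Cp ^ 2 < (μ Set.univ).toReal → (∫ x, g x ^ 2 ∂μ) = 0) :=
  stmt_8_general μ hpos β hβ φ K hbound hφint hmean hφexpint hexplb g hEL hφexppos Cp hPoincare
end

section
/- Let G be a finite measure space and let φ_k → φ in L²(G) with the family (∫_G e^{2|φ_k| + 2|φ|})_{k} uniformly bounded by some M > 0. Then ∫_G e^{φ_k} → ∫_G e^{φ} as k → ∞. -/
/-!
Since `exp` is convex, `|eᵃ - eᵇ| ≤ |a - b| e^{|a| + |b|}`; integrating and applying
Cauchy–Schwarz gives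
`|∫ e^{φₖ} - ∫ e^φ| ≤ ‖φₖ - φ‖₂ (∫ e^{2|φₖ| + 2|φ|})^{1/2} ≤ ‖φₖ - φ‖₂ √M → 0`.
-/

open MeasureTheory Real Filter

namespace Real

lemma exp_sub_exp_le_sub_mul_exp (x y : ℝ) : exp x - exp y ≤ (x - y) * exp x := by
  have tangent := mul_le_mul_of_nonneg_left (add_one_le_exp (y - x)) (exp_pos x).le
  rw [← exp_add, add_sub_cancel] at tangent
  linarith

lemma abs_exp_sub_exp_le (a b : ℝ) : |exp a - exp b| ≤ |a - b| * exp (|a| + |b|) := by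
  wlog hba : b ≤ a generalizing a b
  · simpa only [abs_sub_comm, add_comm] using this b a (le_of_not_ge hba)
  calc |exp a - exp b| = exp a - exp b := abs_of_nonneg (sub_nonneg.2 (exp_le_exp.2 hba))
    _ ≤ (a - b) * exp a := exp_sub_exp_le_sub_mul_exp a b
    _ ≤ |a - b| * exp (|a| + |b|) := by
      gcongr
      · exact le_abs_self _
      · linarith [le_abs_self a, abs_nonneg b]

lemma abs_sub_le_exp_abs_add_abs (a b : ℝ) : |a - b| ≤ exp (|a| + |b|) := by
  linarith [abs_sub a b, add_one_le_exp (|a| + |b|)]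

end Real

namespace MeasureTheory

variable {α : Type*} [MeasurableSpace α] {μ : Measure α}

theorem integral_mul_le_sqrt_mul_sqrt {f g : α → ℝ} (hf₀ : 0 ≤ᵐ[μ] f) (hg₀ : 0 ≤ᵐ[μ] g)
    (hf : MemLp f 2 μ) (hg : MemLp g 2 μ) :
    ∫ x, f x * g x ∂μ ≤ √(∫ x, f x ^ 2 ∂μ) * √(∫ x, g x ^ 2 ∂μ) := by
  have := integral_mul_le_Lp_mul_Lq_of_nonneg HolderConjugate.two_two hf₀ hg₀
    (by simpa using hf) (by simpa using hg)
  simpa only [sqrt_eq_rpow, rpow_two] using this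

theorem abs_integral_exp_sub_integral_exp_le {f g : α → ℝ}
    (hf : AEStronglyMeasurable f μ) (hg : AEStronglyMeasurable g μ)
    (hef : Integrable (fun x => exp (f x)) μ) (heg : Integrable (fun x => exp (g x)) μ)
    (hfg : Integrable (fun x => exp (2 * |f x| + 2 * |g x|)) μ) :
    |∫ x, exp (f x) ∂μ - ∫ x, exp (g x) ∂μ|
      ≤ √(∫ x, (f x - g x) ^ 2 ∂μ) * √(∫ x, exp (2 * |f x| + 2 * |g x|) ∂μ) := by
  set w := fun x => exp (|f x| + |g x|)
  have hw_sq : ∀ x, w x ^ 2 = exp (2 * |f x| + 2 * |g x|) := fun x => by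
    rw [← exp_nat_mul]; ring_nf
  have hw : MemLp w 2 μ :=
    (memLp_two_iff_integrable_sq (by fun_prop)).2 (by simpa only [hw_sq] using hfg)
  have hd : MemLp (fun x => |f x - g x|) 2 μ :=
    hw.of_le (by fun_prop) (ae_of_all _ fun x => by
      simpa only [w, norm_eq_abs, abs_abs, abs_exp] using abs_sub_le_exp_abs_add_abs (f x) (g x))
  calc |∫ x, exp (f x) ∂μ - ∫ x, exp (g x) ∂μ|
      = |∫ x, (exp (f x) - exp (g x)) ∂μ| := by rw [integral_sub hef heg]
    _ ≤ ∫ x, |exp (f x) - exp (g x)| ∂μ := abs_integral_le_integral_abs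
    _ ≤ ∫ x, |f x - g x| * w x ∂μ :=
      integral_mono_of_nonneg (ae_of_all _ fun _ => abs_nonneg _) (hd.integrable_mul hw)
        (ae_of_all _ fun x => abs_exp_sub_exp_le (f x) (g x))
    _ ≤ √(∫ x, |f x - g x| ^ 2 ∂μ) * √(∫ x, w x ^ 2 ∂μ) :=
      integral_mul_le_sqrt_mul_sqrt (ae_of_all _ fun _ => abs_nonneg _)
        (ae_of_all _ fun _ => (exp_pos _).le) hd hw
    _ = √(∫ x, (f x - g x) ^ 2 ∂μ) * √(∫ x, exp (2 * |f x| + 2 * |g x|) ∂μ) := by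
      simp only [sq_abs, hw_sq]

end MeasureTheory

theorem stmt_10_general {α : Type*} [MeasurableSpace α] (μ : Measure α)
    (φk : ℕ → α → ℝ) (φ : α → ℝ)
    (hφkmeas : ∀ k, Measurable (φk k)) (hφmeas : Measurable φ)
    (hL2 : Tendsto (fun k => ∫ x, (φk k x - φ x) ^ 2 ∂μ) atTop (nhds 0))
    (M : ℝ)
    (hexpk : ∀ k, Integrable (fun x => Real.exp (φk k x)) μ)
    (hexp : Integrable (fun x => Real.exp (φ x)) μ)
    (hunif : ∀ k, Integrable (fun x => Real.exp (2 * |φk k x| + 2 * |φ x|)) μ)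
    (hbound : ∀ k, (∫ x, Real.exp (2 * |φk k x| + 2 * |φ x|) ∂μ) ≤ M) :
    Tendsto (fun k => ∫ x, Real.exp (φk k x) ∂μ) atTop
      (nhds (∫ x, Real.exp (φ x) ∂μ)) := by
  have hdist : ∀ k, dist (∫ x, exp (φk k x) ∂μ) (∫ x, exp (φ x) ∂μ)
      ≤ √(∫ x, (φk k x - φ x) ^ 2 ∂μ) * √M := fun k => by
    rw [dist_eq]
    refine (abs_integral_exp_sub_integral_exp_le (hφkmeas k).aestronglyMeasurable
      hφmeas.aestronglyMeasurable (hexpk k) hexp (hunif k)).trans ?_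
    gcongr
    exact hbound k
  have hlim : Tendsto (fun k => √(∫ x, (φk k x - φ x) ^ 2 ∂μ) * √M) atTop (nhds 0) := by
    simpa using ((continuous_sqrt.tendsto 0).comp hL2).mul_const √M
  exact tendsto_iff_dist_tendsto_zero.2 (squeeze_zero (fun _ => dist_nonneg) hdist hlim)

/-- Continuity of the exponential integral under `L²` convergence with a uniform
exponential moment bound. -/
theorem stmt_10 {α : Type*} [MeasurableSpace α] (μ : Measure α) [IsFiniteMeasure μ]
    (φk : ℕ → α → ℝ) (φ : α → ℝ)
    (hφkmeas : ∀ k, Measurable (φk k)) (hφmeas : Measurable φ)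
    (hL2 : Tendsto (fun k => ∫ x, (φk k x - φ x) ^ 2 ∂μ) atTop (nhds 0))
    (M : ℝ) (hM : 0 < M)
    (hexpk : ∀ k, Integrable (fun x => Real.exp (φk k x)) μ)
    (hexp : Integrable (fun x => Real.exp (φ x)) μ)
    (hunif : ∀ k, Integrable (fun x => Real.exp (2 * |φk k x| + 2 * |φ x|)) μ)
    (hbound : ∀ k, (∫ x, Real.exp (2 * |φk k x| + 2 * |φ x|) ∂μ) ≤ M) :
    Tendsto (fun k => ∫ x, Real.exp (φk k x) ∂μ) atTop
      (nhds (∫ x, Real.exp (φ x) ∂μ)) :=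
  stmt_10_general μ φk φ hφkmeas hφmeas hL2 M hexpk hexp hunif hbound
end

section
/- Let y : [t₀, ∞) → [0, ∞) be continuously differentiable with y'(t) ≤ K₃ y(t)² + K₄ for all t ≥ t₀, where K₃, K₄ > 0, and suppose ∫_{t₀}^{∞} y(s) ds ≤ 1 and y(t₀) ≤ 1. Then y(t) ≤ (1 + K₄) e^{K₃} for all t ∈ [t₀, t₀ + 1]. -/
open MeasureTheory Real Set intervalIntegral

/-!
Let `Y t = ∫_{t₀}^t y`. Since `y² = y · Y'`, the hypothesis reads `y' ≤ K₃ Y' y + K₄`, a linear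
differential inequality with integrating factor `exp (-K₃ Y)`: the function
`y exp (-K₃ Y) - K₄ t` is nonincreasing. Hence
`y t ≤ (y t₀ + K₄ (t - t₀)) exp (K₃ Y t)`, and `y t₀ ≤ 1`, `t - t₀ ≤ 1`, `0 ≤ Y t ≤ 1` give the bound.
-/

theorem le_mul_exp_of_deriv_le_mul_add_mul_exp {y y' A α : ℝ → ℝ} {a b c : ℝ}
    (hy : ContinuousOn y (Icc a b)) (hA : ContinuousOn A (Icc a b))
    (hy' : ∀ t ∈ Ioo a b, HasDerivAt y (y' t) t) (hA' : ∀ t ∈ Ioo a b, HasDerivAt A (α t) t)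
    (hle : ∀ t ∈ Ioo a b, y' t ≤ α t * y t + c * exp (A t)) :
    ∀ t ∈ Icc a b, y t ≤ (y a * exp (-A a) + c * (t - a)) * exp (A t) := by
  set g : ℝ → ℝ := fun t => y t * exp (-A t) - c * t
  have hg_deriv : ∀ t ∈ Ioo a b,
      HasDerivAt g ((y' t - α t * y t) * exp (-A t) - c) t := by
    intro t ht
    exact (((hy' t ht).mul (hA' t ht).neg.exp).sub ((hasDerivAt_id' t).const_mul c)).congr_deriv
      (by simp only [Pi.neg_apply]; ring)
  have hg_anti : AntitoneOn g (Icc a b) := by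
    refine antitoneOn_of_hasDerivWithinAt_nonpos (convex_Icc a b)
      (f' := fun t => (y' t - α t * y t) * exp (-A t) - c)
      (hy.mul (hA.neg.rexp) |>.sub (continuousOn_const.mul continuousOn_id)) ?_ ?_
    · rw [interior_Icc]
      exact fun t ht => (hg_deriv t ht).hasDerivWithinAt
    · rw [interior_Icc]
      intro t ht
      have hfactor : (y' t - α t * y t) * exp (-A t) ≤ c := by
        calc (y' t - α t * y t) * exp (-A t) ≤ c * exp (A t) * exp (-A t) :=
              mul_le_mul_of_nonneg_right (by linarith [hle t ht]) (exp_pos _).le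
          _ = c := by rw [mul_assoc, ← exp_add, add_neg_cancel, exp_zero, mul_one]
      linarith
  intro t ht
  have hgt : g t ≤ g a := hg_anti (left_mem_Icc.2 (ht.1.trans ht.2)) ht ht.1
  have hexp : exp (-A t) * exp (A t) = 1 := by rw [← exp_add, neg_add_cancel, exp_zero]
  calc y t = y t * exp (-A t) * exp (A t) := by rw [mul_assoc, hexp, mul_one]
    _ ≤ (y a * exp (-A a) + c * (t - a)) * exp (A t) :=
        mul_le_mul_of_nonneg_right (by simp only [g] at hgt; linarith) (exp_pos _).le

theorem hasDerivAt_integral_of_continuousOn_Ici {f : ℝ → ℝ} {a t : ℝ}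
    (hf : ContinuousOn f (Ici a)) (ht : a < t) :
    HasDerivAt (fun u => ∫ s in a..u, f s) (f t) t :=
  integral_hasDerivAt_right ((hf.mono Icc_subset_Ici_self).intervalIntegrable_of_Icc ht.le)
    ((hf.mono Ioi_subset_Ici_self).stronglyMeasurableAtFilter isOpen_Ioi t ht)
    ((hf t ht.le).continuousAt (Ici_mem_nhds ht))

theorem continuousOn_integral_of_continuousOn_Ici {f : ℝ → ℝ} {a b : ℝ}
    (hf : ContinuousOn f (Ici a)) (hab : a ≤ b) :
    ContinuousOn (fun u => ∫ s in a..u, f s) (Icc a b) := by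
  rw [← uIcc_of_le hab]
  exact continuousOn_primitive_interval
    ((hf.mono ((uIcc_of_le hab).trans_subset Icc_subset_Ici_self)).integrableOn_compact
      isCompact_uIcc)

theorem stmt_13_general (t₀ K₃ K₄ : ℝ) (hK₃ : 0 < K₃) (hK₄ : 0 < K₄)
    (y y' : ℝ → ℝ)
    (hy0 : ∀ t, t₀ ≤ t → 0 ≤ y t)
    (hderiv : ∀ t, t₀ ≤ t → HasDerivAt y (y' t) t)
    (hineq : ∀ t, t₀ ≤ t → y' t ≤ K₃ * y t ^ 2 + K₄)
    (hint : ∀ T, t₀ ≤ T → (∫ s in t₀..T, y s) ≤ 1)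
    (hinit : y t₀ ≤ 1) :
    ∀ t ∈ Icc t₀ (t₀ + 1), y t ≤ (1 + K₄) * Real.exp K₃ := by
  intro t ht
  have hyc : ContinuousOn y (Ici t₀) := fun s hs => (hderiv s hs).continuousAt.continuousWithinAt
  set Y : ℝ → ℝ := fun u => ∫ s in t₀..u, y s
  have hY_nonneg : ∀ u, t₀ ≤ u → 0 ≤ Y u := fun u hu => integral_nonneg hu fun s hs => hy0 s hs.1
  have hgronwall := le_mul_exp_of_deriv_le_mul_add_mul_exp
    (A := fun u => K₃ * Y u) (α := fun u => K₃ * y u) (c := K₄)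
    (hyc.mono Icc_subset_Ici_self)
    (continuousOn_const.mul (continuousOn_integral_of_continuousOn_Ici hyc (by linarith)))
    (fun u hu => hderiv u hu.1.le)
    (fun u hu => (hasDerivAt_integral_of_continuousOn_Ici hyc hu.1).const_mul K₃)
    (fun u hu => by
      have : 1 ≤ exp (K₃ * Y u) := one_le_exp (mul_nonneg hK₃.le (hY_nonneg u hu.1.le))
      nlinarith [hineq u hu.1.le]) t ht
  simp only [Y, integral_same, mul_zero, neg_zero, exp_zero, mul_one] at hgronwall
  calc y t ≤ (y t₀ + K₄ * (t - t₀)) * exp (K₃ * Y t) := hgronwall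
    _ ≤ (1 + K₄) * exp K₃ := by
        gcongr ?_ * exp ?_
        · nlinarith [ht.2]
        · exact mul_le_of_le_one_right hK₃.le (hint t ht.1)

/-- Quantitative comparison argument from Lemma 3.9. -/
theorem stmt_13 (t₀ K₃ K₄ : ℝ) (hK₃ : 0 < K₃) (hK₄ : 0 < K₄)
    (y y' : ℝ → ℝ)
    (hy0 : ∀ t, t₀ ≤ t → 0 ≤ y t)
    (hy'c : ContinuousOn y' (Ici t₀))
    (hderiv : ∀ t, t₀ ≤ t → HasDerivAt y (y' t) t)
    (hineq : ∀ t, t₀ ≤ t → y' t ≤ K₃ * y t ^ 2 + K₄)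
    (hint : ∀ T, t₀ ≤ T → (∫ s in t₀..T, y s) ≤ 1)
    (hinit : y t₀ ≤ 1) :
    ∀ t ∈ Icc t₀ (t₀ + 1), y t ≤ (1 + K₄) * Real.exp K₃ :=
  stmt_13_general t₀ K₃ K₄ hK₃ hK₄ y y' hy0 hderiv hineq hint hinit
end
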